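/- arXiv:1306.0113 — 5 statements merged into one kernel-verified Lean document; each statement's English description precedes it below -/
import Mathlib

section
/- Suppose the columns of X restricted to a nonempty index set A with |A| = a satisfy X_j^T X_j = n for all j ∈ A and |X_i^T X_j| ≤ n/(2a) for all i ≠ j in A. Then X_A^T X_A is invertible and its inverse M = (X_A^T X_A)^{-1} satisfies, for every l ∈ A: Σ_{k ≠ l} |M_{kl}| ≤ 1/n − 1/(n a) ≤ M_{ll} ≤ 1/n + 1/(n a). -/
/-!
Write `G = c (I + E)` with off-diagonal entries of `E` bounded by `1/(2a)`. Each row of `G` is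
strictly diagonally dominant, so `G` is invertible. For a column `v` of `G⁻¹`, i.e. `G v = e_l`,
row `l` gives `|c v_l - 1| ≤ c s / (2a)` with `s = ∑_{k ≠ l} |v_k|`, and the rows `i ≠ l`,
summed, give `(2a + 1) c s ≤ (a - 1) (c |v_l| + c s)`. Eliminating `|v_l|` yields
`c s ≤ 2a(a - 1) / ((2a + 1)(a + 1)) ≤ 1 - 1/a`, and then `c v_l` lies within `1/a` of `1`.
-/

open Finset Matrix

lemma bounds_of_abs_sub_one_le_of_mul_le {a x y : ℝ} (ha : 1 ≤ a) (hy : 0 ≤ y)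
    (hx : |x - 1| ≤ y / (2 * a)) (hsum : (2 * a + 1) * y ≤ (a - 1) * (|x| + y)) :
    y ≤ 1 - 1 / a ∧ 1 - 1 / a ≤ x ∧ x ≤ 1 + 1 / a := by
  have ha0 : 0 < a := by linarith
  have hx' : |x - 1| * (2 * a) ≤ y := (le_div_iff₀ (by positivity)).mp hx
  have habs : |x| * (2 * a) ≤ 2 * a + y := by
    have := abs_sub_abs_le_abs_sub x 1
    rw [abs_one] at this
    nlinarith
  have hya : y * a ≤ a - 1 := by
    nlinarith [mul_le_mul_of_nonneg_left habs (by linarith : (0 : ℝ) ≤ a - 1),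
      mul_nonneg hy (sq_nonneg a)]
  have hy_le : y ≤ 1 - 1 / a := by
    rwa [one_sub_div ha0.ne', le_div_iff₀ ha0]
  have hdev : |x - 1| ≤ 1 / a := by
    rw [le_div_iff₀ ha0]; nlinarith [abs_nonneg (x - 1)]
  refine ⟨hy_le, ?_, ?_⟩ <;> linarith [abs_le.mp hdev]

section Coherence

variable {ι : Type*} [Fintype ι] [DecidableEq ι]

lemma abs_mulVec_sub_diag_mul_le (G : Matrix ι ι ℝ) {μ : ℝ}
    (hoff : ∀ i j, i ≠ j → |G i j| ≤ μ) (v : ι → ℝ) (i : ι) :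
    |(G *ᵥ v) i - G i i * v i| ≤ μ * ∑ k ∈ univ.erase i, |v k| := by
  rw [mulVec, dotProduct, ← add_sum_erase _ _ (mem_univ i), add_sub_cancel_left, mul_sum]
  refine (abs_sum_le_sum_abs _ _).trans (sum_le_sum fun k hk => ?_)
  rw [abs_mul]
  exact mul_le_mul_of_nonneg_right (hoff i k (ne_of_mem_erase hk).symm) (abs_nonneg _)

variable {G : Matrix ι ι ℝ} {c : ℝ} (hdiag : ∀ i, G i i = c)
include hdiag

lemma isUnit_of_abs_offDiag_le (hc : 0 < c)
    (hoff : ∀ i j, i ≠ j → |G i j| ≤ c / (2 * Fintype.card ι)) : IsUnit G := by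
  refine (isUnit_iff_isUnit_det G).mpr (det_ne_zero_of_sum_row_lt_diag fun k => ?_).isUnit
  have : Nonempty ι := ⟨k⟩
  have hcard : ((univ.erase k).card : ℝ) < 2 * Fintype.card ι := by
    rw [card_erase_of_mem (mem_univ k), card_univ, Nat.cast_sub Fintype.card_pos]
    linarith [(Nat.one_le_cast (α := ℝ)).mpr (Fintype.card_pos (α := ι))]
  calc ∑ j ∈ univ.erase k, ‖G k j‖ ≤ (univ.erase k).card * (c / (2 * Fintype.card ι)) := by
        rw [← nsmul_eq_mul]
        exact sum_le_card_nsmul _ _ _ fun j hj => hoff k j (ne_of_mem_erase hj).symm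
    _ < c := by
        rw [mul_div_assoc', div_lt_iff₀ (by positivity)]
        nlinarith
    _ = ‖G k k‖ := by rw [hdiag, Real.norm_of_nonneg hc.le]

section Solution

variable {μ : ℝ} (hoff : ∀ i j, i ≠ j → |G i j| ≤ μ) {v : ι → ℝ} {l : ι}
  (hv : G *ᵥ v = Pi.single l 1)
include hoff hv

lemma abs_mul_apply_sub_one_le : |c * v l - 1| ≤ μ * ∑ k ∈ univ.erase l, |v k| := by
  simpa [hv, hdiag, abs_sub_comm] using abs_mulVec_sub_diag_mul_le G hoff v l

lemma mul_sum_erase_abs_le (hc : 0 ≤ c) :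
    c * ∑ k ∈ univ.erase l, |v k| ≤
      μ * ((Fintype.card ι - 1) * (|v l| + ∑ k ∈ univ.erase l, |v k|) -
        ∑ k ∈ univ.erase l, |v k|) := by
  have hrow : ∀ i ∈ univ.erase l, c * |v i| ≤ μ * (∑ k, |v k| - |v i|) := fun i hi => by
    have := abs_mulVec_sub_diag_mul_le G hoff v i
    rwa [hv, Pi.single_eq_of_ne (ne_of_mem_erase hi), hdiag, zero_sub, abs_neg, abs_mul,
      sum_erase_eq_sub (mem_univ i), abs_of_nonneg hc] at this
  have : Nonempty ι := ⟨l⟩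
  calc c * ∑ k ∈ univ.erase l, |v k| ≤ ∑ i ∈ univ.erase l, μ * (∑ k, |v k| - |v i|) := by
        rw [mul_sum]; exact sum_le_sum hrow
    _ = _ := by
        rw [← mul_sum, sum_sub_distrib, sum_const, card_erase_of_mem (mem_univ l), card_univ,
          nsmul_eq_mul, ← add_sum_erase _ _ (mem_univ l), Nat.cast_pred Fintype.card_pos]

end Solution

lemma bounds_of_mulVec_eq_single (hc : 0 < c)
    (hoff : ∀ i j, i ≠ j → |G i j| ≤ c / (2 * Fintype.card ι)) {v : ι → ℝ} {l : ι}
    (hv : G *ᵥ v = Pi.single l 1) :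
    ∑ k ∈ univ.erase l, |v k| ≤ 1 / c - 1 / (c * Fintype.card ι) ∧
      1 / c - 1 / (c * Fintype.card ι) ≤ v l ∧ v l ≤ 1 / c + 1 / (c * Fintype.card ι) := by
  set a : ℝ := (Fintype.card ι : ℝ)
  set s := ∑ k ∈ univ.erase l, |v k|
  have ha : 1 ≤ a := Nat.one_le_cast.mpr (Fintype.card_pos_iff.mpr ⟨l⟩)
  have h1 := abs_mul_apply_sub_one_le hdiag hoff hv
  have h2 := mul_sum_erase_abs_le hdiag hoff hv hc.le
  rw [div_mul_eq_mul_div] at h1 h2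
  rw [le_div_iff₀ (by positivity)] at h2
  obtain ⟨hs, hlo, hhi⟩ := bounds_of_abs_sub_one_le_of_mul_le (x := c * v l) (y := c * s) ha
    (by positivity) h1 (by rw [abs_mul, abs_of_pos hc]; linarith)
  have hsub : 1 / c - 1 / (c * a) = (1 - 1 / a) / c := by ring
  have hadd : 1 / c + 1 / (c * a) = (1 + 1 / a) / c := by ring
  rw [hsub, hadd, le_div_iff₀ hc, div_le_iff₀ hc, le_div_iff₀ hc]
  exact ⟨by linarith, by linarith, by linarith⟩

end Coherence

theorem gram_inverse_entry_bounds_general (n p : ℕ) (hn : 0 < n)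
    (X : Matrix (Fin n) (Fin p) ℝ) (A : Finset (Fin p))
    (hnorm : ∀ j ∈ A, ∑ i, X i j * X i j = (n : ℝ))
    (hcoh : ∀ i ∈ A, ∀ j ∈ A, i ≠ j →
      |∑ k, X k i * X k j| ≤ (n : ℝ) / (2 * A.card)) :
    let G : Matrix A A ℝ := fun i j => ∑ k, X k i * X k j
    IsUnit G ∧ ∀ l : A,
      (∑ k ∈ Finset.univ.erase l, |G⁻¹ k l|) ≤ 1 / n - 1 / (n * A.card) ∧
      1 / n - 1 / (n * A.card) ≤ G⁻¹ l l ∧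
      G⁻¹ l l ≤ 1 / n + 1 / (n * A.card) := by
  intro G
  have hc : (0 : ℝ) < n := Nat.cast_pos.mpr hn
  have hdiag : ∀ i, G i i = n := fun i => hnorm i i.2
  have hoff : ∀ i j, i ≠ j → |G i j| ≤ n / (2 * Fintype.card A) := fun i j hij => by
    simpa using hcoh i i.2 j j.2 (Subtype.coe_ne_coe.mpr hij)
  have hunit := isUnit_of_abs_offDiag_le hdiag hc hoff
  refine ⟨hunit, fun l => ?_⟩
  have hv : G *ᵥ G⁻¹.col l = Pi.single l 1 := by
    rw [← mulVec_single_one, mulVec_mulVec,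
      mul_nonsing_inv _ ((isUnit_iff_isUnit_det G).mp hunit), one_mulVec]
  simpa using bounds_of_mulVec_eq_single hdiag hc hoff hv

/-- Diagonal dominance of the inverse Gram matrix under mutual coherence.
If the columns of `X` indexed by a nonempty set `A` of cardinality `a` satisfy
`Xⱼᵀ Xⱼ = n` and `|Xᵢᵀ Xⱼ| ≤ n/(2a)` for `i ≠ j`, then the Gram matrix `X_Aᵀ X_A`
is invertible and its inverse `M` satisfies, for every `l ∈ A`,
`∑_{k ≠ l} |M k l| ≤ 1/n − 1/(n a) ≤ M l l ≤ 1/n + 1/(n a)`. -/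
theorem gram_inverse_entry_bounds (n p : ℕ) (hn : 0 < n)
    (X : Matrix (Fin n) (Fin p) ℝ) (A : Finset (Fin p)) (hA : A.Nonempty)
    (hnorm : ∀ j ∈ A, ∑ i, X i j * X i j = (n : ℝ))
    (hcoh : ∀ i ∈ A, ∀ j ∈ A, i ≠ j →
      |∑ k, X k i * X k j| ≤ (n : ℝ) / (2 * A.card)) :
    let G : Matrix A A ℝ := fun i j => ∑ k, X k i * X k j
    IsUnit G ∧ ∀ l : A,
      (∑ k ∈ Finset.univ.erase l, |G⁻¹ k l|) ≤ 1 / n - 1 / (n * A.card) ∧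
      1 / n - 1 / (n * A.card) ≤ G⁻¹ l l ∧
      G⁻¹ l l ≤ 1 / n + 1 / (n * A.card) :=
  gram_inverse_entry_bounds_general n p hn X A hnorm hcoh
end

section
/- Under the coherence condition |X_i^T X_j| ≤ n/(2a) for distinct i,j in A (with columns normalized to X_j^T X_j = n), for every sign vector σ ∈ {−1,+1}^a and every q ∈ (0,∞], one has ||(X_A^T X_A)^{-1} σ||_q ≤ 2 a^{1/q} / n (with a^{1/∞} interpreted as 1). -/
open scoped BigOperators

/-- Under the mutual coherence condition, for every sign vector `σ ∈ {−1,+1}^a` and every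
`q ∈ (0,∞]`, one has `‖(X_Aᵀ X_A)⁻¹ σ‖_q ≤ 2 a^(1/q) / n`; the case `q = ∞` reads
`|((X_Aᵀ X_A)⁻¹ σ)_k| ≤ 2/n` for every `k` (with `a^(1/∞) = 1`). -/
theorem gram_inverse_sign_vector_lq_bound (n p : ℕ) (hn : 0 < n)
    (X : Matrix (Fin n) (Fin p) ℝ) (A : Finset (Fin p)) (hA : A.Nonempty)
    (hnorm : ∀ j ∈ A, ∑ i, X i j * X i j = (n : ℝ))
    (hcoh : ∀ i ∈ A, ∀ j ∈ A, i ≠ j →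
      |∑ k, X k i * X k j| ≤ (n : ℝ) / (2 * A.card))
    (σ : A → ℝ) (hσ : ∀ k, σ k = 1 ∨ σ k = -1) :
    let G : Matrix A A ℝ := fun i j => ∑ k, X k i * X k j
    (∀ q : ℝ, 0 < q →
      (∑ k, |G⁻¹.mulVec σ k| ^ q) ^ (1 / q) ≤ 2 * (A.card : ℝ) ^ (1 / q) / n) ∧
    (∀ k, |G⁻¹.mulVec σ k| ≤ 2 / n) := by
  intro G
  have hn' : (0 : ℝ) < n := by exact_mod_cast hn
  have ha' : (0 : ℝ) < A.card := by exact_mod_cast Finset.card_pos.mpr hA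
  set v : A → ℝ := G⁻¹.mulVec σ with hv
  have key : ∀ k, |v k| ≤ 2 / n := by
    by_cases hG : IsUnit G.det
    · have hmul : G.mulVec v = σ := by
        rw [hv, Matrix.mulVec_mulVec, Matrix.mul_nonsing_inv _ hG, Matrix.one_mulVec]
      have : Nonempty {x // x ∈ A} := ⟨⟨hA.choose, hA.choose_spec⟩⟩
      obtain ⟨k₀, -, hk₀⟩ := Finset.exists_max_image Finset.univ (fun k => |v k|)
        Finset.univ_nonempty
      set M := |v k₀| with hM
      have hM0 : 0 ≤ M := abs_nonneg _
      have hMle : M ≤ 2 / n := by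
        have hrow : ∑ j, G k₀ j * v j = σ k₀ := congrFun hmul k₀
        have hsplit : G k₀ k₀ * v k₀ + ∑ j ∈ Finset.univ.erase k₀, G k₀ j * v j = σ k₀ := by
          rw [Finset.add_sum_erase _ (fun j => G k₀ j * v j) (Finset.mem_univ k₀)]
          exact hrow
        have hGkk : G k₀ k₀ = (n : ℝ) := hnorm k₀ k₀.2
        have hS : |∑ j ∈ Finset.univ.erase k₀, G k₀ j * v j| ≤ (n / 2) * M := by
          calc |∑ j ∈ Finset.univ.erase k₀, G k₀ j * v j|
              ≤ ∑ j ∈ Finset.univ.erase k₀, |G k₀ j * v j| := Finset.abs_sum_le_sum_abs _ _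
            _ ≤ (Finset.univ.erase k₀).card • ((n / (2 * A.card)) * M) := by
                apply Finset.sum_le_card_nsmul
                intro j hj
                have hne : (k₀ : Fin p) ≠ (j : Fin p) := by
                  intro h
                  exact (Finset.mem_erase.mp hj).1 (Subtype.ext h.symm)
                have h1 : |G k₀ j| ≤ (n : ℝ) / (2 * A.card) := hcoh k₀ k₀.2 j j.2 hne
                have h2 : |v j| ≤ M := hk₀ j (Finset.mem_univ _)
                rw [abs_mul]
                exact mul_le_mul h1 h2 (abs_nonneg _) (by positivity)
            _ ≤ A.card • ((n / (2 * A.card)) * M) := by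
                apply nsmul_le_nsmul_left (by positivity)
                calc (Finset.univ.erase k₀).card ≤ Finset.univ.card :=
                      Finset.card_le_card (Finset.erase_subset _ _)
                  _ = A.card := by simp [Fintype.card_coe]
            _ = (n / 2) * M := by
                rw [nsmul_eq_mul]
                field_simp
        have hσ1 : |σ k₀| = 1 := by rcases hσ k₀ with h | h <;> simp [h]
        have hnv : (n : ℝ) * M ≤ 1 + (n / 2) * M := by
          have : (n : ℝ) * v k₀ = σ k₀ - ∑ j ∈ Finset.univ.erase k₀, G k₀ j * v j := by
            rw [← hGkk]; linarith [hsplit]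
          calc (n : ℝ) * M = |(n : ℝ) * v k₀| := by
                rw [abs_mul, abs_of_nonneg hn'.le]
            _ = |σ k₀ - ∑ j ∈ Finset.univ.erase k₀, G k₀ j * v j| := by rw [this]
            _ ≤ |σ k₀| + |∑ j ∈ Finset.univ.erase k₀, G k₀ j * v j| := abs_sub _ _
            _ ≤ 1 + (n / 2) * M := by rw [hσ1]; linarith [hS]
        rw [le_div_iff₀ hn']
        nlinarith
      intro k
      exact le_trans (hk₀ k (Finset.mem_univ _)) hMle
    · intro k
      rw [hv, Matrix.nonsing_inv_apply_not_isUnit _ hG]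
      simp only [Matrix.zero_mulVec, Pi.zero_apply, abs_zero]
      positivity
  refine ⟨?_, key⟩
  intro q hq
  have hsum : ∑ k, |v k| ^ q ≤ (A.card : ℝ) * (2 / n) ^ q := by
    calc ∑ k, |v k| ^ q ≤ ∑ _k : A, (2 / n : ℝ) ^ q :=
          Finset.sum_le_sum fun k _ => Real.rpow_le_rpow (abs_nonneg _) (key k) hq.le
      _ = (Fintype.card A : ℝ) * (2 / n) ^ q := by rw [Finset.sum_const, nsmul_eq_mul]; norm_num
      _ = (A.card : ℝ) * (2 / n) ^ q := by rw [Fintype.card_coe]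
  have h0 : (0 : ℝ) ≤ ∑ k, |v k| ^ q :=
    Finset.sum_nonneg fun k _ => Real.rpow_nonneg (abs_nonneg _) _
  calc (∑ k, |v k| ^ q) ^ (1 / q) ≤ ((A.card : ℝ) * (2 / n) ^ q) ^ (1 / q) :=
        Real.rpow_le_rpow h0 hsum (by positivity)
    _ = (A.card : ℝ) ^ (1 / q) * ((2 / n : ℝ) ^ q) ^ (1 / q) :=
        Real.mul_rpow ha'.le (Real.rpow_nonneg (by positivity) _)
    _ = (A.card : ℝ) ^ (1 / q) * (2 / n) := by
        rw [← Real.rpow_mul (by positivity), mul_one_div_cancel hq.ne', Real.rpow_one]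
    _ = 2 * (A.card : ℝ) ^ (1 / q) / n := by ring
end

section
/- Let β̂ be a minimizer of g(||Y − Xβ||_2^2) + λ||β||_1 with a minimal number of nonzero entries among all minimizers, and let Ŝ = {j : β̂_j ≠ 0} be nonempty. Then the matrix X_Ŝ^T X_Ŝ is invertible (equivalently, the columns of X indexed by Ŝ are linearly independent). -/
/-!
If a nonzero `r` supported in `Ŝ` had `X r = 0`, then along `t ↦ β̂ + t r` the residual is constant
and the `ℓ₁` norm is affine up to the first `t` at which a coordinate of `β̂` vanishes. Minimality at
`t = 0` forces the slope to be zero, so that point is a minimizer with strictly smaller support.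
Hence the columns of `X` on `Ŝ` are independent, and `X_Ŝᵀ X_Ŝ` is positive definite.
-/

open Finset Matrix

lemma abs_add_eq_abs_add_sign_mul {a b : ℝ} (h : |b| ≤ |a|) : |a + b| = |a| + Real.sign a * b := by
  obtain ⟨hb₁, hb₂⟩ := abs_le.1 h
  rcases lt_trichotomy a 0 with ha | rfl | ha
  · rw [Real.sign_of_neg ha, abs_of_neg ha, abs_of_nonpos (by linarith [abs_of_neg ha])]
    ring
  · simp_all
  · rw [Real.sign_of_pos ha, abs_of_pos ha, abs_of_nonneg (by linarith [abs_of_pos ha])]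
    ring

section

variable {ι : Type*} [Fintype ι]

lemma sum_abs_add_eq_of_abs_le {β r : ι → ℝ} (h : ∀ j, |r j| ≤ |β j|) :
    ∑ j, |β j + r j| = ∑ j, |β j| + ∑ j, Real.sign (β j) * r j := by
  rw [← sum_add_distrib]
  exact sum_congr rfl fun j _ => abs_add_eq_abs_add_sign_mul (h j)

lemma exists_abs_div_mul_le (β r : ι → ℝ) (hr : r ≠ 0) :
    ∃ j₀, r j₀ ≠ 0 ∧ ∀ j, |β j₀ / r j₀| * |r j| ≤ |β j| := by
  classical
  obtain ⟨j₁, hj₁⟩ := Function.ne_iff.1 hr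
  obtain ⟨j₀, hj₀, hmin⟩ := (univ.filter (r · ≠ 0)).exists_min_image (fun j => |β j / r j|)
    ⟨j₁, by simpa using hj₁⟩
  refine ⟨j₀, (mem_filter.1 hj₀).2, fun j => ?_⟩
  by_cases hj : r j = 0
  · simp [hj]
  · calc |β j₀ / r j₀| * |r j| ≤ |β j / r j| * |r j| :=
          mul_le_mul_of_nonneg_right (hmin j (by simpa using hj)) (abs_nonneg _)
      _ = |β j| := by rw [abs_div, div_mul_cancel₀ _ (abs_ne_zero.2 hj)]

/-- Along `t ↦ β + t r` the `ℓ₁` norm is affine until the first coordinate of `β` hits zero,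
so if it is minimal at `t = 0` it is constant up to that point. -/
lemma exists_vanishing_of_forall_le_sum_abs {lam : ℝ} {β r : ι → ℝ}
    (hmin : ∀ t : ℝ, lam * ∑ j, |β j| ≤ lam * ∑ j, |β j + t * r j|) (hr : r ≠ 0) :
    ∃ j₀ t, r j₀ ≠ 0 ∧ β j₀ + t * r j₀ = 0 ∧ lam * ∑ j, |β j + t * r j| = lam * ∑ j, |β j| := by
  obtain ⟨j₀, hj₀, hle⟩ := exists_abs_div_mul_le β r hr
  set t₀ := -(β j₀ / r j₀)
  have hsum : ∀ s : ℝ, |s| = |t₀| →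
      ∑ j, |β j + s * r j| = ∑ j, |β j| + s * ∑ j, Real.sign (β j) * r j := by
    intro s hs
    rw [sum_abs_add_eq_of_abs_le fun j => ?_, mul_sum]
    · simp only [mul_left_comm]
    · rw [abs_mul, hs, abs_neg]
      exact hle j
  have hpos := hmin t₀
  have hneg := hmin (-t₀)
  rw [hsum t₀ rfl] at hpos
  rw [hsum (-t₀) (abs_neg t₀)] at hneg
  refine ⟨j₀, t₀, hj₀, by rw [neg_mul, div_mul_cancel₀ _ hj₀, add_neg_cancel], ?_⟩
  rw [hsum t₀ rfl]
  nlinarith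

lemma exists_sparser_minimizer {φ : (ι → ℝ) → ℝ} {lam : ℝ} {β r : ι → ℝ}
    (hmin : ∀ γ, φ β + lam * ∑ j, |β j| ≤ φ γ + lam * ∑ j, |γ j|)
    (hφ : ∀ t : ℝ, φ (β + t • r) = φ β) (hr : r ≠ 0) (hsupp : ∀ j, β j = 0 → r j = 0) :
    ∃ β', (∀ γ, φ β' + lam * ∑ j, |β' j| ≤ φ γ + lam * ∑ j, |γ j|) ∧
      #(univ.filter (β' · ≠ 0)) < #(univ.filter (β · ≠ 0)) := by
  have hline : ∀ t : ℝ, lam * ∑ j, |β j| ≤ lam * ∑ j, |β j + t * r j| := fun t => by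
    simpa [hφ t] using hmin (β + t • r)
  obtain ⟨j₀, t, hj₀, hvanish, hnorm⟩ := exists_vanishing_of_forall_le_sum_abs hline hr
  refine ⟨β + t • r, fun γ => ?_, card_lt_card ?_⟩
  · calc φ (β + t • r) + lam * ∑ j, |(β + t • r) j| = φ β + lam * ∑ j, |β j| := by
          simpa [hφ t] using hnorm
      _ ≤ φ γ + lam * ∑ j, |γ j| := hmin γ
  · refine (ssubset_iff_of_subset fun j => ?_).2 ⟨j₀, ?_, ?_⟩
    · simp only [mem_filter, mem_univ, true_and, Pi.add_apply, Pi.smul_apply, smul_eq_mul]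
      exact mt fun hβj => by rw [hβj, hsupp j hβj, mul_zero, add_zero]
    · simpa using mt (hsupp j₀) hj₀
    · simpa using hvanish

end

lemma Matrix.mulVec_dite_mem {ι m R : Type*} [Fintype ι] [DecidableEq ι]
    [NonUnitalNonAssocSemiring R] (X : Matrix m ι R) (S : Finset ι) (c : S → R) :
    X *ᵥ (fun j => if hj : j ∈ S then c ⟨j, hj⟩ else 0) = X.submatrix id (↑) *ᵥ c := by
  ext i
  simp only [mulVec, dotProduct, mul_dite, mul_zero, submatrix_apply, id, univ_eq_attach]
  rw [sum_attach_eq_sum_dite]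

theorem linearIndependent_col_support_of_sparsest_minimizer {ι m : Type*} [Fintype ι]
    {h : (m → ℝ) → ℝ} {lam : ℝ} {X : Matrix m ι ℝ} {β : ι → ℝ}
    (hmin : ∀ γ, h (X *ᵥ β) + lam * ∑ j, |β j| ≤ h (X *ᵥ γ) + lam * ∑ j, |γ j|)
    (hsparse : ∀ γ, (∀ δ, h (X *ᵥ γ) + lam * ∑ j, |γ j| ≤ h (X *ᵥ δ) + lam * ∑ j, |δ j|) →
      #(univ.filter (β · ≠ 0)) ≤ #(univ.filter (γ · ≠ 0))) :
    LinearIndependent ℝ (fun j : univ.filter (β · ≠ 0) => X.col j) := by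
  classical
  set S := univ.filter (β · ≠ 0)
  change LinearIndependent ℝ (X.submatrix id ((↑) : S → ι)).col
  rw [← mulVec_injective_iff]
  refine (injective_iff_map_eq_zero (X.submatrix id ((↑) : S → ι)).mulVecLin).2 fun c hc => ?_
  by_contra hc0
  set r : ι → ℝ := fun j => if hj : j ∈ S then c ⟨j, hj⟩ else 0
  have hXr : X *ᵥ r = 0 := by rwa [Matrix.mulVec_dite_mem]
  have hr : r ≠ 0 := by
    obtain ⟨j, hj⟩ := Function.ne_iff.1 hc0
    exact Function.ne_iff.2 ⟨j, by simpa [r] using hj⟩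
  have hsupp : ∀ j, β j = 0 → r j = 0 := fun j hβj => dif_neg (by simpa [S] using hβj)
  obtain ⟨β', hβ'min, hlt⟩ := exists_sparser_minimizer (φ := fun γ => h (X *ᵥ γ)) hmin
    (fun t => by simp [mulVec_add, mulVec_smul, hXr]) hr hsupp
  exact (hsparse β' hβ'min).not_gt hlt

lemma Matrix.isUnit_conjTranspose_mul_self {m n K : Type*} [Fintype m] [Fintype n]
    [DecidableEq n] [Field K] [PartialOrder K] [StarRing K] [StarOrderedRing K]
    {A : Matrix m n K} (hA : LinearIndependent K A.col) : IsUnit (Aᴴ * A) :=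
  (PosDef.conjTranspose_mul_self A (mulVec_injective_iff.2 hA)).isUnit

theorem gram_on_support_invertible_general (n p : ℕ)
    (Y : Fin n → ℝ) (X : Matrix (Fin n) (Fin p) ℝ) (lam : ℝ)
    (g : ℝ → ℝ)
    (βhat : Fin p → ℝ)
    (hmin : ∀ β : Fin p → ℝ,
        g (∑ i, (Y i - X.mulVec βhat i) ^ 2) + lam * ∑ j, |βhat j| ≤
        g (∑ i, (Y i - X.mulVec β i) ^ 2) + lam * ∑ j, |β j|)
    (hsparse : ∀ β : Fin p → ℝ,
      (∀ γ : Fin p → ℝ,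
        g (∑ i, (Y i - X.mulVec β i) ^ 2) + lam * ∑ j, |β j| ≤
        g (∑ i, (Y i - X.mulVec γ i) ^ 2) + lam * ∑ j, |γ j|) →
      (Finset.univ.filter (fun j => βhat j ≠ 0)).card ≤
        (Finset.univ.filter (fun j => β j ≠ 0)).card) :
    let S : Finset (Fin p) := Finset.univ.filter (fun j => βhat j ≠ 0)
    let G : Matrix S S ℝ := fun i j => ∑ k, X k i * X k j
    IsUnit G ∧
      LinearIndependent ℝ (fun j : S => (fun i => X i j : Fin n → ℝ)) := by
  intro S G
  have hcols : LinearIndependent ℝ (fun j : S => (fun i => X i j : Fin n → ℝ)) :=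
    linearIndependent_col_support_of_sparsest_minimizer
      (h := fun v => g (∑ i, (Y i - v i) ^ 2)) hmin hsparse
  have hG : G = (X.submatrix id ((↑) : S → Fin p))ᴴ * X.submatrix id (↑) := by
    ext i j
    simp [G, mul_apply]
  exact ⟨hG ▸ isUnit_conjTranspose_mul_self hcols, hcols⟩

/-- If `β̂` is a minimizer of the penalized criterion with a minimal number of nonzero
entries among all minimizers, and its support `Ŝ` is nonempty, then the Gram matrix
`X_Ŝᵀ X_Ŝ` is invertible (equivalently, the columns of `X` indexed by `Ŝ` are linearly
independent). -/
theorem gram_on_support_invertible (n p : ℕ)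
    (Y : Fin n → ℝ) (X : Matrix (Fin n) (Fin p) ℝ) (lam : ℝ) (hlam : 0 < lam)
    (g : ℝ → ℝ)
    (hg_convex : ConvexOn ℝ (Set.Ici (0 : ℝ)) g)
    (hg_mono : MonotoneOn g (Set.Ici (0 : ℝ)))
    (βhat : Fin p → ℝ)
    (hmin : ∀ β : Fin p → ℝ,
        g (∑ i, (Y i - X.mulVec βhat i) ^ 2) + lam * ∑ j, |βhat j| ≤
        g (∑ i, (Y i - X.mulVec β i) ^ 2) + lam * ∑ j, |β j|)
    (hsparse : ∀ β : Fin p → ℝ,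
      (∀ γ : Fin p → ℝ,
        g (∑ i, (Y i - X.mulVec β i) ^ 2) + lam * ∑ j, |β j| ≤
        g (∑ i, (Y i - X.mulVec γ i) ^ 2) + lam * ∑ j, |γ j|) →
      (Finset.univ.filter (fun j => βhat j ≠ 0)).card ≤
        (Finset.univ.filter (fun j => β j ≠ 0)).card)
    (hS : (Finset.univ.filter (fun j => βhat j ≠ 0)).Nonempty) :
    let S : Finset (Fin p) := Finset.univ.filter (fun j => βhat j ≠ 0)
    let G : Matrix S S ℝ := fun i j => ∑ k, X k i * X k j
    IsUnit G ∧
      LinearIndependent ℝ (fun j : S => (fun i => X i j : Fin n → ℝ)) :=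
  gram_on_support_invertible_general n p Y X lam g βhat hmin hsparse
end

section
/- If for some nonzero r ∈ R^a a point w lies on the boundary of the ℓ1-ball K = {u ∈ R^a : ||u||_1 ≤ ||w||_1}, then there exists a scalar α ∈ R such that w + α r still lies in K and has at least one coordinate equal to zero that was not forced, i.e., w + α r has strictly fewer nonzero coordinates than a (more precisely: there exists α with (w + α r)_i = 0 for some index i and ||w + α r||_1 ≤ ||w||_1). -/
/-!
Write `d i = sign (w i) * r i` for the rate at which `|w i + α * r i|` changes near `α = 0`.
After replacing `r` by `-r` if necessary, `∑ i, d i ≤ 0`. As long as no coordinate has changed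
sign, `∑ i, |w i + α * r i| = ∑ i, |w i| + α * ∑ i, d i` for `α ≥ 0`, so the ℓ₁-norm does not
increase; stopping at the first `α ≥ 0` at which a shrinking coordinate (`d i < 0`) hits zero
gives the required point.
-/

open Finset

lemma abs_eq_sign_mul_of_nonneg {x z : ℝ} (hx : x ≠ 0) (h : 0 ≤ SignType.sign x * z) :
    |z| = SignType.sign x * z := by
  rcases hx.lt_or_gt with hx | hx
  · rw [sign_neg hx] at h ⊢
    simp only [SignType.coe_neg_one, neg_one_mul] at h ⊢
    exact abs_of_nonpos (neg_nonneg.mp h)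
  · rw [sign_pos hx] at h ⊢
    simp only [SignType.coe_one, one_mul] at h ⊢
    exact abs_of_nonneg h

lemma abs_add_mul_eq_of_sign_mul_nonneg {x y β : ℝ} (hx : x ≠ 0)
    (h : 0 ≤ |x| + β * (SignType.sign x * y)) :
    |x + β * y| = |x| + β * (SignType.sign x * y) := by
  have hsign : SignType.sign x * (x + β * y) = |x| + β * (SignType.sign x * y) := by
    rw [← sign_mul_self x]; ring
  rw [abs_eq_sign_mul_of_nonneg hx (hsign ▸ h), hsign]

lemma exists_nonneg_add_mul_nonneg_and_eq_zero {ι : Type*} [Fintype ι] (c d : ι → ℝ)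
    (hc : ∀ i, 0 ≤ c i) (hd : ∃ i, d i < 0) :
    ∃ β, 0 ≤ β ∧ (∀ i, 0 ≤ c i + β * d i) ∧ ∃ i, c i + β * d i = 0 := by
  classical
  obtain ⟨i₀, hi₀, hmin⟩ := exists_min_image {i | d i < 0} (fun i => c i / -d i)
    (by simpa [Finset.Nonempty] using hd)
  have hd₀ : d i₀ < 0 := by simpa using hi₀
  have hβ : 0 ≤ c i₀ / -d i₀ := div_nonneg (hc i₀) (neg_nonneg.mpr hd₀.le)
  refine ⟨c i₀ / -d i₀, hβ, fun i => ?_, i₀, ?_⟩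
  · rcases lt_or_ge (d i) 0 with hdi | hdi
    · have hle := hmin i (by simpa using hdi)
      rw [le_div_iff₀ (neg_pos.mpr hdi)] at hle
      linarith
    · exact add_nonneg (hc i) (mul_nonneg hβ hdi)
  · rw [div_neg, neg_mul, div_mul_cancel₀ _ hd₀.ne, add_neg_cancel]

theorem exists_add_mul_eq_zero_and_sum_abs_le_of_sum_sign_mul_nonpos {ι : Type*} [Fintype ι]
    (w r : ι → ℝ) (hw : ∀ i, w i ≠ 0) (hr : r ≠ 0)
    (hs : ∑ i, SignType.sign (w i) * r i ≤ 0) :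
    ∃ α, (∃ i, w i + α * r i = 0) ∧ ∑ i, |w i + α * r i| ≤ ∑ i, |w i| := by
  set d : ι → ℝ := fun i => SignType.sign (w i) * r i
  have hd : ∃ i, d i < 0 := by
    by_contra! hd
    obtain ⟨j, hj⟩ := Function.ne_iff.mp hr
    have hdj : d j ≠ 0 := mul_ne_zero
      (fun h => hw j (by rw [← sign_mul_abs (w j), h, zero_mul])) hj
    have := sum_pos' (fun i _ => hd i) ⟨j, mem_univ j, (hd j).lt_of_ne' hdj⟩
    linarith
  obtain ⟨β, hβ, hnonneg, i₀, hi₀⟩ :=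
    exists_nonneg_add_mul_nonneg_and_eq_zero (fun i => |w i|) d (fun i => abs_nonneg _) hd
  have hnorm : ∑ i, |w i + β * r i| = ∑ i, |w i| + β * ∑ i, d i := by
    rw [mul_sum, ← sum_add_distrib]
    exact sum_congr rfl fun i _ => abs_add_mul_eq_of_sign_mul_nonneg (hw i) (hnonneg i)
  refine ⟨β, ⟨i₀, ?_⟩, ?_⟩
  · rwa [← abs_eq_zero, abs_add_mul_eq_of_sign_mul_nonneg (hw i₀) (hnonneg i₀)]
  · rw [hnorm]
    exact add_le_of_nonpos_right (mul_nonpos_of_nonneg_of_nonpos hβ hs)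

theorem exists_add_mul_eq_zero_and_sum_abs_le {ι : Type*} [Fintype ι] (w r : ι → ℝ)
    (hr : r ≠ 0) :
    ∃ α, (∃ i, w i + α * r i = 0) ∧ ∑ i, |w i + α * r i| ≤ ∑ i, |w i| := by
  by_cases hw : ∃ i, w i = 0
  · obtain ⟨i, hi⟩ := hw
    exact ⟨0, ⟨i, by simp [hi]⟩, by simp⟩
  push Not at hw
  rcases le_total (∑ i, SignType.sign (w i) * r i) 0 with hs | hs
  · exact exists_add_mul_eq_zero_and_sum_abs_le_of_sum_sign_mul_nonpos w r hw hr hs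
  · obtain ⟨α, ⟨i, hi⟩, hle⟩ := exists_add_mul_eq_zero_and_sum_abs_le_of_sum_sign_mul_nonpos
      w (-r) hw (neg_ne_zero.mpr hr) (by simpa [sum_neg_distrib] using hs)
    exact ⟨-α, ⟨i, by simpa using hi⟩, by simpa using hle⟩

/-- Geometric step: given any point `w ∈ ℝ^a` and any nonzero direction `r`, there is a
scalar `α` such that `w + α r` stays in the ℓ₁-ball `{u : ‖u‖₁ ≤ ‖w‖₁}` while some
coordinate of `w + α r` vanishes. -/
theorem l1_ball_translation_kills_coordinate (a : ℕ)
    (w r : Fin a → ℝ) (hr : r ≠ 0) :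
    ∃ α : ℝ, (∃ i : Fin a, w i + α * r i = 0) ∧
      (∑ i, |w i + α * r i|) ≤ ∑ i, |w i| :=
  exists_add_mul_eq_zero_and_sum_abs_le w r hr
end

section
/- Under the strict mutual coherence condition |X_i^T X_j| < n/(2|Ŝ|) for all distinct i, j ∈ Ŝ (columns normalized to squared norm n), every coordinate of (X_Ŝ^T X_Ŝ)^{-1} sign(β̂_Ŝ) has the same sign as the corresponding coordinate of sign(β̂_Ŝ); in particular the sign-disagreement criterion F(Ŝ) = (1/|Ŝ|)|{j ∈ Ŝ : sign(β̂_j) ≠ sign(((X_Ŝ^T X_Ŝ)^{-1} sign(β̂_Ŝ))_j)}| equals 0. -/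
/-!
Let `G` be the Gram matrix on `Ŝ`, `σ = sign β̂_Ŝ` and `v = G⁻¹ σ`. Each row `l` of `G` has diagonal
entry `n` and off-diagonal absolute row sum `r_l ≤ (a - 1) n / (2a) < n / 2`. If `m` maximises
`|v_m|`, row `m` of `G v = σ` gives `(n - r_m) |v_m| ≤ 1`. Since `r_l + r_m < n`, the off-diagonal
part `R_l` of row `l` satisfies `|R_l| ≤ r_l |v_m| < 1`, hence `σ_l n v_l = 1 - σ_l R_l > 0`.
-/

open Finset

theorem Real.abs_sign_of_ne_zero {x : ℝ} (hx : x ≠ 0) : |Real.sign x| = 1 := by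
  rcases Real.sign_apply_eq_of_ne_zero x hx with h | h <;> simp [h]

namespace Matrix

variable {ι : Type*} [Fintype ι] [DecidableEq ι]

def offDiagAbsRowSum (G : Matrix ι ι ℝ) (l : ι) : ℝ :=
  ∑ k ∈ univ.erase l, |G l k|

theorem offDiagAbsRowSum_nonneg (G : Matrix ι ι ℝ) (l : ι) : 0 ≤ G.offDiagAbsRowSum l :=
  sum_nonneg fun _ _ => abs_nonneg _

theorem mulVec_eq_diag_add_sum_erase (G : Matrix ι ι ℝ) (v : ι → ℝ) (l : ι) :
    (G *ᵥ v) l = G l l * v l + ∑ k ∈ univ.erase l, G l k * v k :=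
  (add_sum_erase _ _ (mem_univ l)).symm

theorem abs_sum_erase_mul_le (G : Matrix ι ι ℝ) {v : ι → ℝ} {M : ℝ} (hv : ∀ k, |v k| ≤ M)
    (l : ι) : |∑ k ∈ univ.erase l, G l k * v k| ≤ G.offDiagAbsRowSum l * M := by
  calc |∑ k ∈ univ.erase l, G l k * v k|
      ≤ ∑ k ∈ univ.erase l, |G l k| * M := by
        refine (abs_sum_le_sum_abs _ _).trans (sum_le_sum fun k _ => ?_)
        rw [abs_mul]
        exact mul_le_mul_of_nonneg_left (hv k) (abs_nonneg _)
    _ = G.offDiagAbsRowSum l * M := (sum_mul ..).symm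

theorem offDiagAbsRowSum_le (G : Matrix ι ι ℝ) {c : ℝ} (l : ι) (hc : ∀ k, k ≠ l → |G l k| ≤ c) :
    G.offDiagAbsRowSum l ≤ (Fintype.card ι - 1) * c := by
  have hcard : ((univ.erase l).card : ℝ) = Fintype.card ι - 1 := by
    rw [card_erase_of_mem (mem_univ l), card_univ,
      Nat.cast_sub (Fintype.card_pos_iff.mpr ⟨l⟩), Nat.cast_one]
  rw [← hcard, ← nsmul_eq_mul]
  exact sum_le_card_nsmul _ _ _ fun k hk => hc k (ne_of_mem_erase hk)

theorem two_mul_offDiagAbsRowSum_lt (G : Matrix ι ι ℝ) {d : ℝ} (hd : 0 < d) (l : ι)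
    (hc : ∀ k, k ≠ l → |G l k| < d / (2 * Fintype.card ι)) :
    2 * G.offDiagAbsRowSum l < d := by
  have hcard : (0 : ℝ) < Fintype.card ι := by exact_mod_cast Fintype.card_pos_iff.mpr ⟨l⟩
  calc 2 * G.offDiagAbsRowSum l
      ≤ 2 * ((Fintype.card ι - 1) * (d / (2 * Fintype.card ι))) := by
        gcongr
        exact G.offDiagAbsRowSum_le l fun k hk => (hc k hk).le
    _ = d - d / Fintype.card ι := by field_simp
    _ < d := sub_lt_self d (by positivity)

section StrongDominance

variable {G : Matrix ι ι ℝ} {d : ℝ} (hdiag : ∀ l, d ≤ G l l)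
  (hoff : ∀ l, 2 * G.offDiagAbsRowSum l < d)
include hdiag hoff

theorem offDiagAbsRowSum_lt_diag (l : ι) : G.offDiagAbsRowSum l < G l l := by
  linarith [hdiag l, hoff l, G.offDiagAbsRowSum_nonneg l]

theorem det_ne_zero_of_two_mul_offDiagAbsRowSum_lt : G.det ≠ 0 := by
  refine det_ne_zero_of_sum_row_lt_diag fun l => ?_
  have h := offDiagAbsRowSum_lt_diag hdiag hoff l
  rw [Real.norm_of_nonneg ((G.offDiagAbsRowSum_nonneg l).trans h.le)]
  simpa only [Real.norm_eq_abs, offDiagAbsRowSum] using h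

theorem abs_sum_erase_mul_lt_one {v : ι → ℝ} (hw : ∀ l, |(G *ᵥ v) l| ≤ 1) (l : ι) :
    |∑ k ∈ univ.erase l, G l k * v k| < 1 := by
  have : Nonempty ι := ⟨l⟩
  obtain ⟨m, hm⟩ := Finite.exists_max fun k => |v k|
  have hrow_m : (d - G.offDiagAbsRowSum m) * |v m| ≤ 1 := by
    have hdiag_m : d * |v m| ≤ |G m m * v m| := by
      rw [abs_mul, abs_of_pos ((G.offDiagAbsRowSum_nonneg m).trans_lt
        (offDiagAbsRowSum_lt_diag hdiag hoff m))]
      exact mul_le_mul_of_nonneg_right (hdiag m) (abs_nonneg _)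
    have hsplit : |G m m * v m| - |∑ k ∈ univ.erase m, G m k * v k| ≤ |(G *ᵥ v) m| := by
      rw [G.mulVec_eq_diag_add_sum_erase v m]
      exact abs_sub_abs_le_abs_add _ _
    linarith [hw m, G.abs_sum_erase_mul_le hm m]
  have hlm : G.offDiagAbsRowSum l < d - G.offDiagAbsRowSum m := by linarith [hoff l, hoff m]
  calc |∑ k ∈ univ.erase l, G l k * v k| ≤ G.offDiagAbsRowSum l * |v m| :=
        G.abs_sum_erase_mul_le hm l
    _ < 1 := by
        rcases (abs_nonneg (v m)).eq_or_lt with h0 | hpos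
        · rw [← h0, mul_zero]; exact one_pos
        · exact (mul_lt_mul_of_pos_right hlm hpos).trans_le hrow_m

theorem sign_eq_of_mulVec_eq {σ v : ι → ℝ} (hσ : ∀ l, |σ l| = 1) (hv : G *ᵥ v = σ) (l : ι) :
    Real.sign (v l) = σ l := by
  have hR := abs_sum_erase_mul_lt_one hdiag hoff (v := v) (fun k => by rw [hv, hσ]) l
  have hGll : 0 < G l l :=
    (G.offDiagAbsRowSum_nonneg l).trans_lt (offDiagAbsRowSum_lt_diag hdiag hoff l)
  have hrow : σ l * (G l l * v l) = 1 - σ l * ∑ k ∈ univ.erase l, G l k * v k := by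
    have := G.mulVec_eq_diag_add_sum_erase v l
    rw [hv] at this
    have hsq : σ l * σ l = 1 := by rw [← abs_mul_abs_self, hσ l, one_mul]
    linear_combination hsq - σ l * this
  have hσR : |σ l * ∑ k ∈ univ.erase l, G l k * v k| < 1 := by rwa [abs_mul, hσ l, one_mul]
  have hprod : 0 < G l l * (σ l * v l) := by
    rw [mul_left_comm, hrow]
    linarith [(abs_lt.mp hσR).2]
  have hpos := pos_of_mul_pos_right hprod hGll.le
  rcases (abs_eq zero_le_one).mp (hσ l) with h | h <;> rw [h] at hpos ⊢
  · exact Real.sign_of_pos (by linarith)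
  · exact Real.sign_of_neg (by linarith)

end StrongDominance

end Matrix

open Matrix in
theorem strict_coherence_criterion_zero_general (n p : ℕ) (hn : 0 < n)
    (X : Matrix (Fin n) (Fin p) ℝ) (βhat : Fin p → ℝ)
    (S : Finset (Fin p)) (hS : ∀ j, j ∈ S ↔ βhat j ≠ 0)
    (hnorm : ∀ j ∈ S, ∑ i, X i j * X i j = (n : ℝ))
    (hcoh : ∀ i ∈ S, ∀ j ∈ S, i ≠ j →
      |∑ k, X k i * X k j| < (n : ℝ) / (2 * S.card)) :
    let G : Matrix S S ℝ := fun i j => ∑ k, X k i * X k j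
    let σ : S → ℝ := fun k => Real.sign (βhat k)
    IsUnit G ∧
    (∀ l : S, Real.sign (G⁻¹.mulVec σ l) = Real.sign (βhat l)) ∧
    (1 / (S.card : ℝ)) *
        (Finset.univ.filter
          (fun l : S => Real.sign (βhat l) ≠ Real.sign (G⁻¹.mulVec σ l))).card = 0 := by
  intro G σ
  have hdiag : ∀ l, (n : ℝ) ≤ G l l := fun l => (hnorm l l.2).ge
  have hoff : ∀ l, 2 * G.offDiagAbsRowSum l < n := fun l =>
    G.two_mul_offDiagAbsRowSum_lt (by exact_mod_cast hn) l fun k hkl => by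
      simpa only [Fintype.card_coe] using hcoh l l.2 k k.2 (Subtype.coe_ne_coe.mpr hkl.symm)
  have hdet := det_ne_zero_of_two_mul_offDiagAbsRowSum_lt hdiag hoff
  have hGv : G *ᵥ (G⁻¹ *ᵥ σ) = σ := by
    rw [mulVec_mulVec, mul_nonsing_inv _ (isUnit_iff_ne_zero.mpr hdet), one_mulVec]
  have hsign : ∀ l : S, Real.sign ((G⁻¹ *ᵥ σ) l) = Real.sign (βhat l) :=
    sign_eq_of_mulVec_eq hdiag hoff (fun l => Real.abs_sign_of_ne_zero ((hS l).mp l.2)) hGv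
  refine ⟨(isUnit_iff_isUnit_det G).mpr (isUnit_iff_ne_zero.mpr hdet), hsign, ?_⟩
  simp [hsign]

/-- Under the strict mutual coherence condition `|Xᵢᵀ Xⱼ| < n/(2|Ŝ|)` on the support `Ŝ`
of `β̂` (columns normalized to squared norm `n`), the Gram matrix on `Ŝ` is invertible,
every coordinate of `(X_Ŝᵀ X_Ŝ)⁻¹ sign(β̂_Ŝ)` has the same sign as the corresponding
coordinate of `sign(β̂_Ŝ)`, and the sign-disagreement criterion `F(Ŝ)` equals `0`. -/
theorem strict_coherence_criterion_zero (n p : ℕ) (hn : 0 < n)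
    (X : Matrix (Fin n) (Fin p) ℝ) (βhat : Fin p → ℝ)
    (S : Finset (Fin p)) (hS : ∀ j, j ∈ S ↔ βhat j ≠ 0) (hSne : S.Nonempty)
    (hnorm : ∀ j ∈ S, ∑ i, X i j * X i j = (n : ℝ))
    (hcoh : ∀ i ∈ S, ∀ j ∈ S, i ≠ j →
      |∑ k, X k i * X k j| < (n : ℝ) / (2 * S.card)) :
    let G : Matrix S S ℝ := fun i j => ∑ k, X k i * X k j
    let σ : S → ℝ := fun k => Real.sign (βhat k)
    IsUnit G ∧
    (∀ l : S, Real.sign (G⁻¹.mulVec σ l) = Real.sign (βhat l)) ∧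
    (1 / (S.card : ℝ)) *
        (Finset.univ.filter
          (fun l : S => Real.sign (βhat l) ≠ Real.sign (G⁻¹.mulVec σ l))).card = 0 :=
  strict_coherence_criterion_zero_general n p hn X βhat S hS hnorm hcoh
end
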